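/- arXiv:2210.04778 — 4 statements merged into one kernel-verified Lean document; each statement's English description precedes it below -/
import Mathlib

section
/- For i ∈ {1,…,n−2} and all t_1, t_2, t_3 ∈ ℂ, the braid matrices satisfy z_i(t_1) z_{i+1}(t_2) z_i(t_3) = z_{i+1}(t_3) z_i(t_1 t_3 − t_2) z_{i+1}(t_1) in SL_n(ℂ). -/
open Matrix Pointwise
open scoped Classical

noncomputable section

/-- `phi n i A` places the 2×2 matrix `A` into rows and columns `i, i+1`
(0-based) of the identity matrix. -/
def phi (n i : ℕ) (A : Matrix (Fin 2) (Fin 2) ℂ) : Matrix (Fin n) (Fin n) ℂ :=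
  Matrix.of fun a b =>
    if (a : ℕ) = i ∧ (b : ℕ) = i then A 0 0
    else if (a : ℕ) = i ∧ (b : ℕ) = i + 1 then A 0 1
    else if (a : ℕ) = i + 1 ∧ (b : ℕ) = i then A 1 0
    else if (a : ℕ) = i + 1 ∧ (b : ℕ) = i + 1 then A 1 1
    else if a = b then 1 else 0

def sdot (n i : ℕ) : Matrix (Fin n) (Fin n) ℂ := phi n i !![0, -1; 1, 0]
def xmat (n i : ℕ) (t : ℂ) : Matrix (Fin n) (Fin n) ℂ := phi n i !![1, t; 0, 1]
def ymat (n i : ℕ) (t : ℂ) : Matrix (Fin n) (Fin n) ℂ := phi n i !![1, 0; t, 1]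
def zmat (n i : ℕ) (t : ℂ) : Matrix (Fin n) (Fin n) ℂ := phi n i !![t, -1; 1, 0]
def zbar (n i : ℕ) (t : ℂ) : Matrix (Fin n) (Fin n) ℂ := phi n i !![t, 1; -1, 0]
def alphamat (n i : ℕ) (t : ℂ) : Matrix (Fin n) (Fin n) ℂ := phi n i !![t, 0; 0, 1/t]

/-- The simple transposition swapping `i` and `i+1` (0-based). -/
def sperm (n i : ℕ) : Equiv.Perm (Fin n) :=
  if h : i + 1 < n then Equiv.swap ⟨i, Nat.lt_of_succ_lt h⟩ ⟨i + 1, h⟩ else 1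

def wordPerm (n : ℕ) (l : List ℕ) : Equiv.Perm (Fin n) := (l.map (sperm n)).prod

def wordMat (n : ℕ) (l : List ℕ) : Matrix (Fin n) (Fin n) ℂ := (l.map (sdot n)).prod

def IsWordFor (n : ℕ) (l : List ℕ) (w : Equiv.Perm (Fin n)) : Prop :=
  (∀ i ∈ l, i + 1 < n) ∧ wordPerm n l = w

/-- Coxeter length on `S_n`. -/
def plen (n : ℕ) (w : Equiv.Perm (Fin n)) : ℕ :=
  sInf {k | ∃ l : List ℕ, IsWordFor n l w ∧ l.length = k}

def IsReducedWord (n : ℕ) (l : List ℕ) (w : Equiv.Perm (Fin n)) : Prop :=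
  IsWordFor n l w ∧ l.length = plen n w

/-- The minor of `M` with row set `A` and column set `B` (of equal sizes). -/
def minorD {n : ℕ} (M : Matrix (Fin n) (Fin n) ℂ) (A B : Finset (Fin n)) : ℂ :=
  if h : A.card = B.card then
    (M.submatrix (fun k => A.orderEmbOfFin rfl k) (fun k => B.orderEmbOfFin h.symm k)).det
  else 0

/-- `pset n w k = {w(1),…,w(k)}` (1-indexed), i.e. the image under `w`
of the first `k` elements of `Fin n`. -/
def pset (n : ℕ) (w : Equiv.Perm (Fin n)) (k : ℕ) : Finset (Fin n) :=
  (Finset.univ.filter fun j : Fin n => (j : ℕ) < k).image w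

/-- Upper unitriangular matrices. -/
def Uplus (n : ℕ) : Set (Matrix (Fin n) (Fin n) ℂ) :=
  {g | (∀ i, g i i = 1) ∧ ∀ i j : Fin n, j < i → g i j = 0}

/-- The double coset `U₊ M U₊`. -/
def DCoset (n : ℕ) (M : Matrix (Fin n) (Fin n) ℂ) : Set (Matrix (Fin n) (Fin n) ℂ) :=
  {x | ∃ a ∈ Uplus n, ∃ c ∈ Uplus n, x = a * M * c}

/-- The Borel subgroup of upper triangular matrices in SL_n. -/
def Bplus (n : ℕ) : Set (Matrix (Fin n) (Fin n) ℂ) :=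
  {g | g.det = 1 ∧ ∀ i j : Fin n, j < i → g i j = 0}

/-- The Bruhat cell `B₊ M B₊`. -/
def BruhatCell (n : ℕ) (M : Matrix (Fin n) (Fin n) ℂ) : Set (Matrix (Fin n) (Fin n) ℂ) :=
  {x | ∃ a ∈ Bplus n, ∃ c ∈ Bplus n, x = a * M * c}

def emb3 (n i : ℕ) (M : Matrix (Fin 3) (Fin 3) ℂ) : Matrix (Fin n) (Fin n) ℂ :=
  Matrix.of fun a b =>
    if (a : ℕ) = i ∧ (b : ℕ) = i then M 0 0
    else if (a : ℕ) = i ∧ (b : ℕ) = i + 1 then M 0 1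
    else if (a : ℕ) = i ∧ (b : ℕ) = i + 2 then M 0 2
    else if (a : ℕ) = i + 1 ∧ (b : ℕ) = i then M 1 0
    else if (a : ℕ) = i + 1 ∧ (b : ℕ) = i + 1 then M 1 1
    else if (a : ℕ) = i + 1 ∧ (b : ℕ) = i + 2 then M 1 2
    else if (a : ℕ) = i + 2 ∧ (b : ℕ) = i then M 2 0
    else if (a : ℕ) = i + 2 ∧ (b : ℕ) = i + 1 then M 2 1
    else if (a : ℕ) = i + 2 ∧ (b : ℕ) = i + 2 then M 2 2
    else if a = b then 1 else 0

lemma phi_eq_emb3_lo (n i : ℕ) (A : Matrix (Fin 2) (Fin 2) ℂ) :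
    phi n i A = emb3 n i !![A 0 0, A 0 1, 0; A 1 0, A 1 1, 0; 0, 0, 1] := by
  ext a b
  simp only [phi, emb3, Matrix.of_apply]
  by_cases ha0 : (a:ℕ) = i <;> by_cases ha1 : (a:ℕ) = i+1 <;> by_cases ha2 : (a:ℕ) = i+2 <;>
    by_cases hb0 : (b:ℕ) = i <;> by_cases hb1 : (b:ℕ) = i+1 <;> by_cases hb2 : (b:ℕ) = i+2 <;>
    simp_all [Fin.ext_iff, Matrix.vecHead, Matrix.vecTail] <;> omega

lemma phi_eq_emb3_hi (n i : ℕ) (A : Matrix (Fin 2) (Fin 2) ℂ) :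
    phi n (i + 1) A = emb3 n i !![1, 0, 0; 0, A 0 0, A 0 1; 0, A 1 0, A 1 1] := by
  ext a b
  simp only [phi, emb3, Matrix.of_apply]
  by_cases ha0 : (a:ℕ) = i <;> by_cases ha1 : (a:ℕ) = i+1 <;> by_cases ha2 : (a:ℕ) = i+2 <;>
    by_cases hb0 : (b:ℕ) = i <;> by_cases hb1 : (b:ℕ) = i+1 <;> by_cases hb2 : (b:ℕ) = i+2 <;>
    simp_all [Fin.ext_iff, Matrix.vecHead, Matrix.vecTail] <;> omega


lemma emb3_apply_mem (n i : ℕ) (M : Matrix (Fin 3) (Fin 3) ℂ) (a b : Fin n) (k l : Fin 3)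
    (ha : (a : ℕ) = i + (k : ℕ)) (hb : (b : ℕ) = i + (l : ℕ)) :
    emb3 n i M a b = M k l := by
  fin_cases k <;> fin_cases l <;>
    · norm_num at ha hb
      simp [emb3, ha, hb]

lemma emb3_apply_left_off (n i : ℕ) (M : Matrix (Fin 3) (Fin 3) ℂ) (a b : Fin n)
    (ha0 : (a : ℕ) ≠ i) (ha1 : (a : ℕ) ≠ i + 1) (ha2 : (a : ℕ) ≠ i + 2) :
    emb3 n i M a b = if a = b then 1 else 0 := by
  simp [emb3, ha0, ha1, ha2]

lemma emb3_apply_right_off (n i : ℕ) (M : Matrix (Fin 3) (Fin 3) ℂ) (a b : Fin n)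
    (hb0 : (b : ℕ) ≠ i) (hb1 : (b : ℕ) ≠ i + 1) (hb2 : (b : ℕ) ≠ i + 2) :
    emb3 n i M a b = if a = b then 1 else 0 := by
  simp [emb3, hb0, hb1, hb2]

lemma emb3_mul (n i : ℕ) (h : i + 2 < n) (M N : Matrix (Fin 3) (Fin 3) ℂ) :
    emb3 n i M * emb3 n i N = emb3 n i (M * N) := by
  have h0 : i < n := by omega
  have h1 : i + 1 < n := by omega
  set e : Fin 3 → Fin n := fun k => ⟨i + k, by omega⟩ with he
  have heval : ∀ (P : Matrix (Fin 3) (Fin 3) ℂ) (k l : Fin 3), emb3 n i P (e k) (e l) = P k l :=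
    fun P k l => emb3_apply_mem n i P (e k) (e l) k l rfl rfl
  ext a b
  rw [Matrix.mul_apply]
  by_cases ha : ∃ k : Fin 3, (a : ℕ) = i + (k : ℕ)
  · obtain ⟨k, hak⟩ := ha
    have hae : a = e k := Fin.ext hak
    subst hae
    rw [← Finset.sum_subset (Finset.subset_univ ({e 0, e 1, e 2} : Finset (Fin n)))
        (fun c _ hc => ?_)]
    · rw [Finset.sum_insert (by simp [he, Fin.ext_iff]),
        Finset.sum_insert (by simp [he, Fin.ext_iff]), Finset.sum_singleton]
      rw [emb3_apply_mem n i M (e k) (e 0) k 0 rfl rfl,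
        emb3_apply_mem n i M (e k) (e 1) k 1 rfl rfl,
        emb3_apply_mem n i M (e k) (e 2) k 2 rfl rfl]
      by_cases hb : ∃ l : Fin 3, (b : ℕ) = i + (l : ℕ)
      · obtain ⟨l, hbl⟩ := hb
        have hbe : b = e l := Fin.ext hbl
        subst hbe
        rw [heval, heval, heval, heval, Matrix.mul_apply, Fin.sum_univ_three]
        ring
      · push_neg at hb
        have hb0 : (b : ℕ) ≠ i := by simpa using hb 0
        have hb1 : (b : ℕ) ≠ i + 1 := by simpa using hb 1
        have hb2 : (b : ℕ) ≠ i + 2 := by simpa using hb 2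
        have hz : ∀ j : Fin 3, emb3 n i N (e j) b = 0 := by
          intro j
          rw [emb3_apply_right_off n i N (e j) b hb0 hb1 hb2, if_neg]
          intro hh
          apply hb j
          rw [← hh]
        have hz2 : emb3 n i (M * N) (e k) b = 0 := by
          rw [emb3_apply_right_off n i (M * N) (e k) b hb0 hb1 hb2, if_neg]
          intro hh
          apply hb k
          rw [← hh]
        rw [hz 0, hz 1, hz 2, hz2]
        ring
    · simp only [Finset.mem_insert, Finset.mem_singleton] at hc
      push_neg at hc
      obtain ⟨hc0, hc1, hc2⟩ := hc
      have hcv : ∀ j : Fin 3, (c : ℕ) ≠ i + (j : ℕ) := by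
        intro j hj
        have : c = e j := Fin.ext hj
        fin_cases j <;> simp_all
      have : emb3 n i M (e k) c = 0 := by
        rw [emb3_apply_right_off n i M (e k) c (by simpa using hcv 0)
          (by simpa using hcv 1) (by simpa using hcv 2), if_neg]
        intro hh
        exact hcv k (by rw [← hh])
      rw [this, zero_mul]
  · push_neg at ha
    have ha0 : (a : ℕ) ≠ i := by simpa using ha 0
    have ha1 : (a : ℕ) ≠ i + 1 := by simpa using ha 1
    have ha2 : (a : ℕ) ≠ i + 2 := by simpa using ha 2
    have hM : ∀ c : Fin n, emb3 n i M a c = if a = c then 1 else 0 :=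
      fun c => emb3_apply_left_off n i M a c ha0 ha1 ha2
    simp only [hM, ite_mul, one_mul, zero_mul, Finset.sum_ite_eq, Finset.mem_univ, if_true]
    rw [emb3_apply_left_off n i N a b ha0 ha1 ha2,
      emb3_apply_left_off n i (M * N) a b ha0 ha1 ha2]

lemma three_braid (t₁ t₂ t₃ : ℂ) :
    (!![t₁, -1, 0; 1, 0, 0; 0, 0, 1] * !![1, 0, 0; 0, t₂, -1; 0, 1, 0] *
        !![t₃, -1, 0; 1, 0, 0; 0, 0, 1] : Matrix (Fin 3) (Fin 3) ℂ) =
      !![1, 0, 0; 0, t₃, -1; 0, 1, 0] * !![t₁ * t₃ - t₂, -1, 0; 1, 0, 0; 0, 0, 1] *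
        !![1, 0, 0; 0, t₁, -1; 0, 1, 0] := by
  ext k l
  fin_cases k <;> fin_cases l <;>
    simp [Matrix.mul_apply, Fin.sum_univ_three, Matrix.vecHead, Matrix.vecTail] <;> ring


/-- braid relation for braid matrices. -/
theorem stmt2 (n i : ℕ) (hi : i + 2 < n) (t₁ t₂ t₃ : ℂ) :
    zmat n i t₁ * zmat n (i + 1) t₂ * zmat n i t₃ =
      zmat n (i + 1) t₃ * zmat n i (t₁ * t₃ - t₂) * zmat n (i + 1) t₁ := by

  have e1 : ∀ t : ℂ, zmat n i t = emb3 n i !![t, -1, 0; 1, 0, 0; 0, 0, 1] := by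
    intro t
    rw [zmat, phi_eq_emb3_lo]
    norm_num
  have e2 : ∀ t : ℂ, zmat n (i + 1) t = emb3 n i !![1, 0, 0; 0, t, -1; 0, 1, 0] := by
    intro t
    rw [zmat, phi_eq_emb3_hi]
    norm_num
  rw [e1, e1, e2, e2, e2, e1, emb3_mul n i hi, emb3_mul n i hi, emb3_mul n i hi,
    emb3_mul n i hi]
  exact congrArg (emb3 n i) (three_braid t₁ t₂ t₃)
end
end

section
/- Let Z be an n×n matrix, i ∈ {1,…,n−1}, t ∈ ℂ, and A, B ⊆ {1,…,n} with |A| = |B|. Then Δ_{A,B}(Z z_i(t)) equals Δ_{A,B}(Z) if s_i(B) = B; equals −Δ_{A, s_i(B)}(Z) if s_i(B) < B in lexicographic order; and equals t·Δ_{A,B}(Z) + Δ_{A, s_i(B)}(Z) if s_i(B) > B in lexicographic order. -/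
/-!
Right multiplication by `z_i(t)` replaces column `i` by `t • c_i + c_{i+1}` and column `i+1` by
`-c_i`. A minor only sees the columns in `B`, and is multilinear and alternating in them. If both
`i, i+1 ∈ B` the minor gets multiplied by `det [[t, -1], [1, 0]] = 1`; if neither, it is unchanged.
If exactly one of them lies in `B`, linearity in that column leaves a minor in which column `i` and
column `i+1` of `Z` have traded places; since `i` and `i+1` are adjacent, the transposition keeps
the columns of `B` in increasing order, so this is the minor on `s_i(B)` with no extra sign.
-/

open Matrix Pointwise
open scoped Classical

noncomputable section

open Function

theorem Matrix.submatrix_updateCol_of_injective {l m o p R : Type*} [DecidableEq o]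
    [DecidableEq p] (M : Matrix m o R) (f : l → m) {g : p → o} (hg : Injective g) (k : p)
    (v : m → R) :
    (M.updateCol (g k) v).submatrix f g = (M.submatrix f g).updateCol k (v ∘ f) := by
  ext a k'
  simp [updateCol_apply, hg.eq_iff]

theorem strictMonoOn_swap_of_covBy {α : Type*} [LinearOrder α] {a b : α} (hab : a ⋖ b)
    {s : Set α} (hs : ¬(a ∈ s ∧ b ∈ s)) : StrictMonoOn (Equiv.swap a b) s := by
  intro x hx y hy hxy
  have hcov : ∀ c, a < c → ¬c < b := fun c => @hab.2 c
  rw [Equiv.swap_apply_def, Equiv.swap_apply_def]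
  split_ifs <;> grind [hab.1]

theorem Matrix.det_updateCol_updateCol_smul_add_smul {ι R : Type*} [Fintype ι] [DecidableEq ι]
    [CommRing R] (M : Matrix ι ι R) {k k' : ι} (hk : k ≠ k') (a b c d : R) :
    ((M.updateCol k (a • Mᵀ k + b • Mᵀ k')).updateCol k' (c • Mᵀ k + d • Mᵀ k')).det =
      (a * d - b * c) * M.det := by
  have hself (j : ι) : M.updateCol j (Mᵀ j) = M := updateCol_eq_self M j
  have hdup {j j' : ι} (h : j ≠ j') : (M.updateCol j (Mᵀ j')).det = 0 :=
    det_zero_of_column_eq h fun x => by simp [updateCol_ne h.symm]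
  have hswap : ((M.updateCol k (Mᵀ k')).updateCol k' (Mᵀ k)).det = -M.det := by
    have : (M.updateCol k (Mᵀ k')).updateCol k' (Mᵀ k) = M.submatrix id (Equiv.swap k k') := by
      ext x y
      rcases eq_or_ne y k' with rfl | hyk'
      · simp
      rcases eq_or_ne y k with rfl | hyk
      · simp [hyk']
      · simp [hyk, hyk', Equiv.swap_apply_of_ne_of_ne]
    rw [this, det_permute', Equiv.Perm.sign_swap hk]
    simp
  have hk_col : ((M.updateCol k (a • Mᵀ k + b • Mᵀ k')).updateCol k' (Mᵀ k)).det =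
      -(b * M.det) := by
    rw [updateCol_comm _ hk, det_updateCol_add, det_updateCol_smul, det_updateCol_smul]
    simp only [updateCol_comm _ hk.symm]
    rw [hself, hdup hk.symm, hswap]
    ring
  have hk'_col : ((M.updateCol k (a • Mᵀ k + b • Mᵀ k')).updateCol k' (Mᵀ k')).det =
      a * M.det := by
    rw [updateCol_comm _ hk, hself, det_updateCol_add, det_updateCol_smul, det_updateCol_smul,
      hself, hdup hk]
    ring
  rw [det_updateCol_add, det_updateCol_smul, det_updateCol_smul, hk_col, hk'_col]
  ring

theorem Finset.exists_orderEmbOfFin_eq {α : Type*} [LinearOrder α] {s : Finset α} {k : ℕ}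
    (h : s.card = k) {x : α} (hx : x ∈ s) : ∃ i, s.orderEmbOfFin h i = x := by
  rwa [← Set.mem_range, range_orderEmbOfFin]

section Minors

variable {n : ℕ} (Z : Matrix (Fin n) (Fin n) ℂ) {A B : Finset (Fin n)}

theorem minorD_eq_det (h : A.card = B.card) :
    minorD Z A B = (Z.submatrix (A.orderEmbOfFin rfl) (B.orderEmbOfFin h.symm)).det := by
  rw [minorD, dif_pos h]

theorem minorD_congr {Z' : Matrix (Fin n) (Fin n) ℂ} (hZ : ∀ j ∈ B, Zᵀ j = Z'ᵀ j) :
    minorD Z A B = minorD Z' A B := by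
  unfold minorD
  split_ifs with h
  · congr 1
    ext a k
    exact congrFun (hZ _ (B.orderEmbOfFin_mem h.symm k)) _
  · rfl

theorem minorD_updateCol_of_notMem {j : Fin n} (hj : j ∉ B) (v : Fin n → ℂ) :
    minorD (Z.updateCol j v) A B = minorD Z A B :=
  minorD_congr _ fun _ hj' => funext fun _ => updateCol_ne (ne_of_mem_of_not_mem hj' hj)

theorem minorD_updateCol_orderEmbOfFin (h : A.card = B.card) (k : Fin A.card) (v : Fin n → ℂ) :
    minorD (Z.updateCol (B.orderEmbOfFin h.symm k) v) A B =
      ((Z.submatrix (A.orderEmbOfFin rfl) (B.orderEmbOfFin h.symm)).updateCol k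
        (v ∘ A.orderEmbOfFin rfl)).det := by
  rw [minorD_eq_det _ h, submatrix_updateCol_of_injective _ _ (B.orderEmbOfFin h.symm).injective]

theorem minorD_updateCol_add (h : A.card = B.card) {j : Fin n} (hj : j ∈ B) (v w : Fin n → ℂ) :
    minorD (Z.updateCol j (v + w)) A B =
      minorD (Z.updateCol j v) A B + minorD (Z.updateCol j w) A B := by
  obtain ⟨k, rfl⟩ := B.exists_orderEmbOfFin_eq h.symm hj
  simp only [minorD_updateCol_orderEmbOfFin _ h, Pi.add_comp, det_updateCol_add]

theorem minorD_updateCol_smul (h : A.card = B.card) {j : Fin n} (hj : j ∈ B) (c : ℂ)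
    (v : Fin n → ℂ) :
    minorD (Z.updateCol j (c • v)) A B = c * minorD (Z.updateCol j v) A B := by
  obtain ⟨k, rfl⟩ := B.exists_orderEmbOfFin_eq h.symm hj
  simp only [minorD_updateCol_orderEmbOfFin _ h, Pi.smul_comp, det_updateCol_smul]

theorem minorD_submatrix_perm (h : A.card = B.card) (σ : Equiv.Perm (Fin n))
    (hσ : StrictMonoOn σ B) :
    minorD (Z.submatrix id σ) A B = minorD Z A (B.image σ) := by
  have h' : A.card = (B.image σ).card := by rw [Finset.card_image_of_injective _ σ.injective, h]
  rw [minorD_eq_det _ h, minorD_eq_det _ h', submatrix_submatrix, id_comp]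
  congr 2
  exact Finset.orderEmbOfFin_unique h'.symm
    (fun k => Finset.mem_image_of_mem σ (B.orderEmbOfFin_mem _ k))
    fun _ _ hkl => hσ (B.orderEmbOfFin_mem _ _) (B.orderEmbOfFin_mem _ _)
      ((B.orderEmbOfFin h.symm).strictMono hkl)

theorem minorD_updateCol_eq_minorD_image_swap (h : A.card = B.card) {j j' : Fin n} (hj : j ∈ B)
    (hj' : j' ∉ B) (hcov : j ⋖ j' ∨ j' ⋖ j) :
    minorD (Z.updateCol j (Zᵀ j')) A B = minorD Z A (B.image (Equiv.swap j j')) := by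
  have hmono : StrictMonoOn (Equiv.swap j j') B := by
    rcases hcov with hcov | hcov
    · exact strictMonoOn_swap_of_covBy hcov fun h => hj' h.2
    · rw [Equiv.swap_comm]
      exact strictMonoOn_swap_of_covBy hcov fun h => hj' h.1
  rw [← minorD_submatrix_perm _ h _ hmono]
  refine minorD_congr _ fun l hl => funext fun a => ?_
  rcases eq_or_ne l j with rfl | hlj
  · simp
  · have hlj' : l ≠ j' := ne_of_mem_of_not_mem hl hj'
    simp [updateCol_ne hlj, Equiv.swap_apply_of_ne_of_ne hlj hlj']

theorem minorD_updateCol_updateCol_smul_add_smul (h : A.card = B.card) {j j' : Fin n}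
    (hj : j ∈ B) (hj' : j' ∈ B) (hne : j ≠ j') (a b c d : ℂ) :
    minorD ((Z.updateCol j (a • Zᵀ j + b • Zᵀ j')).updateCol j' (c • Zᵀ j + d • Zᵀ j')) A B =
      (a * d - b * c) * minorD Z A B := by
  obtain ⟨k, rfl⟩ := B.exists_orderEmbOfFin_eq h.symm hj
  obtain ⟨k', rfl⟩ := B.exists_orderEmbOfFin_eq h.symm hj'
  have hk : k ≠ k' := ne_of_apply_ne _ hne
  have hinj := (B.orderEmbOfFin h.symm).injective
  rw [minorD_eq_det _ h, minorD_eq_det _ h, submatrix_updateCol_of_injective _ _ hinj,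
    submatrix_updateCol_of_injective _ _ hinj]
  exact det_updateCol_updateCol_smul_add_smul _ hk a b c d

end Minors

theorem mul_phi {n i : ℕ} {i₀ i₁ : Fin n} (h₀ : (i₀ : ℕ) = i) (h₁ : (i₁ : ℕ) = i + 1)
    (Z : Matrix (Fin n) (Fin n) ℂ) (M : Matrix (Fin 2) (Fin 2) ℂ) :
    Z * phi n i M =
      (Z.updateCol i₀ (M 0 0 • Zᵀ i₀ + M 1 0 • Zᵀ i₁)).updateCol i₁
        (M 0 1 • Zᵀ i₀ + M 1 1 • Zᵀ i₁) := by
  subst h₀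
  have hne : i₀ ≠ i₁ := by simp [← Fin.val_inj, h₁]
  have hphi (k l : Fin n) : phi n i₀ M k l =
      if k = i₀ ∧ l = i₀ then M 0 0 else if k = i₀ ∧ l = i₁ then M 0 1
      else if k = i₁ ∧ l = i₀ then M 1 0 else if k = i₁ ∧ l = i₁ then M 1 1
      else if k = l then 1 else 0 := by
    simp only [phi, of_apply, ← h₁, Fin.val_inj]
  ext a b
  rw [mul_apply]
  simp only [hphi]
  by_cases hb : b = i₀ ∨ b = i₁
  · rcases hb with rfl | rfl <;>
      rw [Fintype.sum_eq_add _ _ hne fun k hk => by simp [hk.1, hk.2]] <;>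
      simp [hne, hne.symm] <;> ring
  · rw [not_or] at hb
    rw [Fintype.sum_eq_single b fun k hk => by simp [hk, hb.1, hb.2]]
    simp [hb.1, hb.2]

theorem mul_zmat {n i : ℕ} {i₀ i₁ : Fin n} (h₀ : (i₀ : ℕ) = i) (h₁ : (i₁ : ℕ) = i + 1)
    (Z : Matrix (Fin n) (Fin n) ℂ) (t : ℂ) :
    Z * zmat n i t = (Z.updateCol i₀ (t • Zᵀ i₀ + Zᵀ i₁)).updateCol i₁ (-Zᵀ i₀) := by
  rw [zmat, mul_phi h₀ h₁]
  simp

/-- The cases `s_i(B) = B`, `s_i(B) < B`, `s_i(B) > B` (lexicographically) are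
`i ∈ B ↔ i+1 ∈ B`, `i+1 ∈ B ∧ i ∉ B` and `i ∈ B ∧ i+1 ∉ B`; indices are 0-based. -/
theorem stmt7 (n i : ℕ) (hi : i + 1 < n) (Z : Matrix (Fin n) (Fin n) ℂ)
    (t : ℂ) (A B : Finset (Fin n)) (hAB : A.card = B.card) :
    (((⟨i, by omega⟩ : Fin n) ∈ B ↔ (⟨i + 1, hi⟩ : Fin n) ∈ B) →
      minorD (Z * zmat n i t) A B = minorD Z A B) ∧
    (((⟨i + 1, hi⟩ : Fin n) ∈ B ∧ (⟨i, by omega⟩ : Fin n) ∉ B) →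
      minorD (Z * zmat n i t) A B = - minorD Z A (B.image (sperm n i))) ∧
    (((⟨i, by omega⟩ : Fin n) ∈ B ∧ (⟨i + 1, hi⟩ : Fin n) ∉ B) →
      minorD (Z * zmat n i t) A B =
        t * minorD Z A B + minorD Z A (B.image (sperm n i))) := by
  set i₀ : Fin n := ⟨i, by omega⟩
  set i₁ : Fin n := ⟨i + 1, hi⟩
  have hcov : i₀ ⋖ i₁ :=
    ⟨Fin.mk_lt_mk.2 i.lt_succ_self, fun c hc hc' => by simp [i₀, i₁, Fin.lt_def] at hc hc'; omega⟩
  have hne : i₀ ≠ i₁ := hcov.ne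
  have hσ : sperm n i = Equiv.swap i₀ i₁ := dif_pos hi
  have hZ : Z * zmat n i t = _ := mul_zmat (i₀ := i₀) (i₁ := i₁) rfl rfl Z t
  have hself : Z.updateCol i₀ (Zᵀ i₀) = Z := updateCol_eq_self Z i₀
  refine ⟨fun hB => ?_, fun ⟨h₁, h₀⟩ => ?_, fun ⟨h₀, h₁⟩ => ?_⟩
  · by_cases h₀ : i₀ ∈ B
    · rw [zmat, mul_phi (i₀ := i₀) (i₁ := i₁) rfl rfl,
        minorD_updateCol_updateCol_smul_add_smul _ hAB h₀ (hB.1 h₀) hne]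
      simp
    · have h₁ : i₁ ∉ B := fun h => h₀ (hB.2 h)
      rw [hZ, minorD_updateCol_of_notMem _ h₁, minorD_updateCol_of_notMem _ h₀]
  · rw [hZ, ← neg_one_smul ℂ (Zᵀ i₀), minorD_updateCol_smul _ hAB h₁, updateCol_comm _ hne,
      minorD_updateCol_of_notMem _ h₀, minorD_updateCol_eq_minorD_image_swap _ hAB h₁ h₀
        (Or.inr hcov), Equiv.swap_comm, hσ, neg_one_mul]
  · rw [hZ, minorD_updateCol_of_notMem _ h₁, minorD_updateCol_add _ hAB h₀,
      minorD_updateCol_smul _ hAB h₀, hself,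
      minorD_updateCol_eq_minorD_image_swap _ hAB h₀ h₁ (Or.inl hcov), hσ]
end
end

section
/- Let h ∈ SL_n be a diagonal matrix, u ∈ S_n, and Z := h · (w_0 u)^• the corresponding monomial matrix, where w_0 is the longest permutation. For j ∈ {1,…,n−1} define the red minors R_j := Δ_{w_0 u[j], [j]}(Z) and blue minors B_j := Δ_{w_0[j], u^{−1}[j]}(Z), and set R_0 = B_0 = R_n = B_n = 1. Then for every a ∈ {1,…,n}, R_a · B_{u(a)−1} = B_{u(a)} · R_{a−1}. -/
open Matrix Pointwise
open scoped Classical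

noncomputable section

/-- Red grid minor `R_j` of the monomial matrix `Z = h · (w₀u)^•` (with
`R_n := 1`; `R_0 = 1` automatically since the empty minor is 1). Here
`wordMat n l` is the lift `(w₀u)^•` along a reduced word `l` for `w₀u`. -/
def Rminor (n : ℕ) (h : Fin n → ℂ) (u : Equiv.Perm (Fin n)) (l : List ℕ) (j : ℕ) : ℂ :=
  if j = n then 1
  else minorD (Matrix.diagonal h * wordMat n l)
    (pset n ((Fin.revPerm : Equiv.Perm (Fin n)) * u) j) (pset n 1 j)

/-- Blue grid minor `B_j` of `Z = h · (w₀u)^•` (with `B_n := 1`). -/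
def Bminor (n : ℕ) (h : Fin n → ℂ) (u : Equiv.Perm (Fin n)) (l : List ℕ) (j : ℕ) : ℂ :=
  if j = n then 1
  else minorD (Matrix.diagonal h * wordMat n l)
    (pset n (Fin.revPerm : Equiv.Perm (Fin n)) j) (pset n u⁻¹ j)

/-! The matrix `Z = h · (w₀u)^•` is monomial: its only nonzero entries are `g j` at `(w j, j)`
with `w = w₀u`. Every red and blue minor takes a column set `S` together with the row set
`w(S)`, so it equals `∏_{j ∈ S} g j` times `(-1)` to the number of inversions of `w` on `S`.
Going from `R_{a-1}` to `R_a`, and from `B_{u(a)-1}` to `B_{u(a)}`, adds the single column `a`,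
and in both cases the new inversions are exactly the `b` with `b < a` and `u b < u a`; hence
both minors get multiplied by the same factor `± g a`. The conventions `R_n = B_n = 1` fit because `det Z = 1`. -/

open Finset

namespace Matrix

variable {ι R : Type*} [DecidableEq ι] [CommRing R]

def monomialMatrix (w : Equiv.Perm ι) (g : ι → R) : Matrix ι ι R :=
  of fun i j => if i = w j then g j else 0

theorem monomialMatrix_mul [Fintype ι] (σ τ : Equiv.Perm ι) (s t : ι → R) :
    monomialMatrix σ s * monomialMatrix τ t =
      monomialMatrix (σ * τ) (fun j => s (τ j) * t j) := by
  ext i j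
  rw [mul_apply, sum_eq_single (τ j)]
  · simp only [monomialMatrix, of_apply, if_true, ite_mul, zero_mul]
    -- `i = σ (τ j)` and `i = (σ * τ) j` agree only up to unfolding
    rfl
  · intro k _ hk
    simp [monomialMatrix, hk]
  · simp

theorem monomialMatrix_one : monomialMatrix (1 : Equiv.Perm ι) (fun _ => (1 : R)) = 1 := by
  ext i j
  simp only [monomialMatrix, of_apply, one_apply]
  rfl

theorem diagonal_mul_monomialMatrix [Fintype ι] (h : ι → R) (w : Equiv.Perm ι) (g : ι → R) :
    diagonal h * monomialMatrix w g = monomialMatrix w (fun j => h (w j) * g j) := by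
  ext i j
  by_cases hij : i = w j <;> simp [monomialMatrix, diagonal_mul, hij]

theorem monomialMatrix_eq_submatrix_diagonal (w : Equiv.Perm ι) (g : ι → R) :
    monomialMatrix w g = (diagonal g).submatrix w.symm id := by
  ext i j
  by_cases hij : i = w j <;> simp [monomialMatrix, Equiv.symm_apply_eq, hij]

theorem det_monomialMatrix [Fintype ι] (w : Equiv.Perm ι) (g : ι → R) :
    (monomialMatrix w g).det = Equiv.Perm.sign w * ∏ j, g j := by
  rw [monomialMatrix_eq_submatrix_diagonal, det_permute, det_diagonal, Equiv.Perm.sign_symm]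

theorem submatrix_monomialMatrix {κ : Type*} [DecidableEq κ] (w : Equiv.Perm ι) (g : ι → R)
    {r c : κ → ι} (hr : Function.Injective r) (σ : Equiv.Perm κ)
    (hσ : ∀ k, r (σ k) = w (c k)) :
    (monomialMatrix w g).submatrix r c = monomialMatrix σ (g ∘ c) := by
  ext i j
  simp [monomialMatrix, ← hσ, hr.eq_iff]

end Matrix

section Inversions

variable {α β : Type*} [LinearOrder α] [LinearOrder β]

def invCount (f : α → β) (s : Finset α) : ℕ :=
  #{p ∈ s ×ˢ s | p.1 < p.2 ∧ f p.2 < f p.1}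

theorem invCount_eq_sum (f : α → β) (s : Finset α) :
    invCount f s = ∑ b ∈ s, ∑ c ∈ s, if b < c ∧ f c < f b then 1 else 0 := by
  rw [invCount, card_filter, sum_product]

theorem invCount_insert (f : α → β) {s : Finset α} {a : α} (ha : a ∉ s) :
    invCount f (insert a s) =
      invCount f s + #{b ∈ s | a < b ∧ f b < f a} + #{b ∈ s | b < a ∧ f a < f b} := by
  simp only [invCount_eq_sum, card_filter, sum_insert ha, lt_irrefl, false_and,
    if_false, zero_add, sum_add_distrib]
  ring

theorem invCount_comp_of_strictMono {γ : Type*} [LinearOrder γ] {e : β → γ}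
    (he : StrictMono e) (f : α → β) (s : Finset α) : invCount (e ∘ f) s = invCount f s := by
  simp only [invCount, Function.comp_apply, he.lt_iff_lt]

theorem invCount_comp_orderEmbedding {γ : Type*} [LinearOrder γ] (f : α → β) (e : γ ↪o α)
    (s : Finset γ) : invCount (f ∘ e) s = invCount f (s.map e.toEmbedding) := by
  rw [invCount, invCount, ← prodMap_map_product, filter_map, card_map]
  exact congrArg card (filter_congr fun x _ => by simp)

theorem sign_eq_neg_one_pow_invCount {k : ℕ} (σ : Equiv.Perm (Fin k)) :
    (Equiv.Perm.sign σ : ℤ) = (-1) ^ invCount σ univ := by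
  have sign_eq_signAux : Equiv.Perm.sign σ = Equiv.Perm.signAux σ := by
    induction σ using Equiv.Perm.swap_induction_on with
    | one => simp [Equiv.Perm.signAux_one]
    | swap_mul f x y hxy ih =>
      rw [Equiv.Perm.sign_mul, Equiv.Perm.sign_swap hxy, Equiv.Perm.signAux_mul,
        Equiv.Perm.signAux_swap hxy, ih]
  have hcard : #{x ∈ Equiv.Perm.finPairsLT k | σ x.1 ≤ σ x.2} = invCount σ univ := by
    refine card_nbij' (fun x => (x.2, x.1)) (fun p => ⟨p.2, p.1⟩) ?_ ?_
      (fun _ _ => rfl) (fun _ _ => rfl)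
    · rintro ⟨a, b⟩
      simp only [coe_filter, Equiv.Perm.mem_finPairsLT, Set.mem_ofPred_eq]
      rintro ⟨hba, hle⟩
      simpa using ⟨hba, hle.lt_of_ne (σ.injective.ne hba.ne')⟩
    · rintro ⟨a, b⟩
      simp only [coe_filter, Set.mem_ofPred_eq, Equiv.Perm.mem_finPairsLT]
      simp +contextual [le_of_lt]
  rw [sign_eq_signAux, Equiv.Perm.signAux, prod_ite, prod_const, prod_const_one, mul_one, hcard]
  simp

end Inversions

def monomialMinor {ι R : Type*} [LinearOrder ι] [CommRing R] (w : Equiv.Perm ι) (g : ι → R)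
    (s : Finset ι) : R :=
  (-1) ^ invCount w s * ∏ b ∈ s, g b

theorem monomialMinor_insert {ι R : Type*} [LinearOrder ι] [CommRing R] (w : Equiv.Perm ι)
    (g : ι → R) {s : Finset ι} {a : ι} (ha : a ∉ s) :
    monomialMinor w g (insert a s) =
      (-1) ^ (#{b ∈ s | a < b ∧ w b < w a} + #{b ∈ s | b < a ∧ w a < w b}) * g a *
        monomialMinor w g s := by
  rw [monomialMinor, monomialMinor, invCount_insert w ha, prod_insert ha]
  ring

theorem det_monomialMatrix_eq_monomialMinor {n : ℕ} {R : Type*} [CommRing R]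
    (w : Equiv.Perm (Fin n)) (g : Fin n → R) :
    (monomialMatrix w g).det = monomialMinor w g univ := by
  rw [det_monomialMatrix, monomialMinor, sign_eq_neg_one_pow_invCount]
  push_cast
  rfl

theorem exists_perm_orderEmbOfFin_image {α : Type*} [LinearOrder α] (w : Equiv.Perm α)
    (s : Finset α)
    (hs : #(s.image w) = #s) :
    ∃ σ : Equiv.Perm (Fin #(s.image w)),
      ∀ k, (s.image w).orderEmbOfFin rfl (σ k) = w (s.orderEmbOfFin hs.symm k) := by
  let f (k : Fin #(s.image w)) : Fin #(s.image w) :=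
    ((s.image w).orderIsoOfFin rfl).symm
      ⟨w (s.orderEmbOfFin hs.symm k), mem_image_of_mem w (orderEmbOfFin_mem s _ k)⟩
  have hf : Function.Injective f := fun k k' hkk' => by
    simpa [f] using hkk'
  refine ⟨Equiv.ofBijective f (Finite.injective_iff_bijective.mp hf), fun k => ?_⟩
  rw [← coe_orderIsoOfFin_apply]
  simp [f]

theorem minorD_monomialMatrix {n : ℕ} (w : Equiv.Perm (Fin n)) (g : Fin n → ℂ)
    (s : Finset (Fin n)) : minorD (monomialMatrix w g) (s.image w) s = monomialMinor w g s := by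
  have hs : #(s.image w) = #s := card_image_of_injective s w.injective
  obtain ⟨σ, hσ⟩ := exists_perm_orderEmbOfFin_image w s hs
  have hinv : invCount σ univ = invCount w s := by
    rw [← invCount_comp_of_strictMono ((s.image w).orderEmbOfFin rfl).strictMono,
      show (s.image w).orderEmbOfFin rfl ∘ σ = w ∘ s.orderEmbOfFin hs.symm from funext hσ,
      invCount_comp_orderEmbedding, map_orderEmbOfFin_univ]
  rw [minorD, dif_pos hs,
    submatrix_monomialMatrix w g ((s.image w).orderEmbOfFin rfl).injective σ hσ,
    det_monomialMatrix, sign_eq_neg_one_pow_invCount, hinv, monomialMinor]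
  push_cast
  congr 1
  conv_rhs => rw [← map_orderEmbOfFin_univ s hs.symm, prod_map]
  rfl

theorem sdot_eq_monomialMatrix (n i : ℕ) (hi : i + 1 < n) :
    sdot n i = monomialMatrix (sperm n i) (fun j => if (j : ℕ) = i + 1 then -1 else 1) := by
  ext a b
  simp only [sdot, phi, monomialMatrix, sperm, dif_pos hi, of_apply, Equiv.swap_apply_def,
    Fin.ext_iff]
  split_ifs <;> simp_all

theorem det_sdot {n i : ℕ} (hi : i + 1 < n) : (sdot n i).det = 1 := by
  have hne : (⟨i, by omega⟩ : Fin n) ≠ ⟨i + 1, hi⟩ := by simp [Fin.ext_iff]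
  rw [sdot_eq_monomialMatrix n i hi, det_monomialMatrix, sperm, dif_pos hi,
    Equiv.Perm.sign_swap hne]
  rw [prod_congr rfl fun j _ => if_congr (Fin.ext_iff (b := ⟨i + 1, hi⟩)).symm rfl rfl,
    prod_ite_eq']
  simp

theorem wordMat_cons (n i : ℕ) (l : List ℕ) : wordMat n (i :: l) = sdot n i * wordMat n l := by
  simp [wordMat]

theorem wordPerm_cons (n i : ℕ) (l : List ℕ) :
    wordPerm n (i :: l) = sperm n i * wordPerm n l := by
  simp [wordPerm]

theorem det_wordMat {n : ℕ} {l : List ℕ} (hl : ∀ i ∈ l, i + 1 < n) :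
    (wordMat n l).det = 1 := by
  induction l with
  | nil => simp [wordMat]
  | cons i l ih =>
    simp only [List.forall_mem_cons] at hl
    rw [wordMat_cons, det_mul, det_sdot hl.1, ih hl.2, one_mul]

theorem exists_wordMat_eq_monomialMatrix {n : ℕ} {l : List ℕ} (hl : ∀ i ∈ l, i + 1 < n) :
    ∃ s, wordMat n l = monomialMatrix (wordPerm n l) s := by
  induction l with
  | nil => exact ⟨fun _ => 1, by simp [wordMat, wordPerm, monomialMatrix_one]⟩
  | cons i l ih =>
    simp only [List.forall_mem_cons] at hl
    obtain ⟨s, hs⟩ := ih hl.2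
    exact ⟨_, by rw [wordMat_cons, hs, sdot_eq_monomialMatrix n i hl.1, monomialMatrix_mul,
      wordPerm_cons]⟩

theorem exists_diagonal_mul_wordMat_eq_monomialMatrix {n : ℕ} {l : List ℕ}
    {w : Equiv.Perm (Fin n)} (h : Fin n → ℂ) (hl : IsWordFor n l w) :
    ∃ g, diagonal h * wordMat n l = monomialMatrix w g := by
  obtain ⟨s, hs⟩ := exists_wordMat_eq_monomialMatrix hl.1
  exact ⟨_, by rw [hs, hl.2, diagonal_mul_monomialMatrix]⟩

section Pset

variable {n : ℕ}

theorem mem_pset {v : Equiv.Perm (Fin n)} {k : ℕ} {b : Fin n} :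
    b ∈ pset n v k ↔ ((v⁻¹ b : Fin n) : ℕ) < k := by
  simp [pset, Equiv.Perm.inv_def, ← Equiv.eq_symm_apply]

theorem pset_eq_image_pset_inv (v u : Equiv.Perm (Fin n)) (k : ℕ) :
    pset n v k = (pset n u⁻¹ k).image (v * u) := by
  simp [pset, image_image, Function.comp_def]

theorem pset_self_eq_univ (v : Equiv.Perm (Fin n)) : pset n v n = univ := by
  ext b
  simp [mem_pset]

theorem pset_succ (v : Equiv.Perm (Fin n)) (k : Fin n) :
    pset n v (k + 1) = insert (v k) (pset n v k) := by
  ext b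
  rw [mem_insert, mem_pset, mem_pset, ← Equiv.Perm.inv_eq_iff_eq, Fin.ext_iff]
  omega

theorem apply_notMem_pset (v : Equiv.Perm (Fin n)) (k : Fin n) : v k ∉ pset n v k := by
  simp [mem_pset]

end Pset

section GridMinors

variable {n : ℕ} (u : Equiv.Perm (Fin n))

local notation "w₀" => (Fin.revPerm : Equiv.Perm (Fin n))

theorem revPerm_mul_lt_revPerm_mul_iff {x y : Fin n} :
    (w₀ * u) x < (w₀ * u) y ↔ u y < u x := by
  simp [Equiv.Perm.mul_apply, Fin.rev_lt_rev]

theorem monomialMinor_revPerm_mul_insert (g : Fin n → ℂ) {s : Finset (Fin n)} {a : Fin n}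
    (ha : a ∉ s) (hs : ∀ b ∈ s, b < a ∨ u b < u a)
    (hsub : ∀ b, b < a → u b < u a → b ∈ s) :
    monomialMinor (w₀ * u) g (insert a s) =
      (-1) ^ #{b | b < a ∧ u b < u a} * g a * monomialMinor (w₀ * u) g s := by
  have hafter : #{b ∈ s | a < b ∧ (w₀ * u) b < (w₀ * u) a} = 0 := by
    rw [card_eq_zero, filter_eq_empty_iff]
    rintro b hb ⟨hab, hw⟩
    rw [revPerm_mul_lt_revPerm_mul_iff] at hw
    exact (hs b hb).elim (lt_asymm hab) (lt_asymm hw)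
  have hbefore : {b ∈ s | b < a ∧ (w₀ * u) a < (w₀ * u) b} =
      ({b | b < a ∧ u b < u a} : Finset (Fin n)) := by
    ext b
    simp only [mem_filter, mem_univ, true_and, revPerm_mul_lt_revPerm_mul_iff,
      and_iff_right_iff_imp]
    exact fun hb => hsub b hb.1 hb.2
  rw [monomialMinor_insert _ _ ha, hafter, hbefore, zero_add]

theorem monomialMinor_pset_one_succ (g : Fin n → ℂ) (a : Fin n) :
    monomialMinor (w₀ * u) g (pset n 1 (a + 1)) =
      (-1) ^ #{b | b < a ∧ u b < u a} * g a * monomialMinor (w₀ * u) g (pset n 1 a) := by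
  have hsucc := pset_succ 1 a
  rw [Equiv.Perm.one_apply] at hsucc
  rw [hsucc, monomialMinor_revPerm_mul_insert u g (a := a) (apply_notMem_pset 1 a)
    (fun b hb => Or.inl (by simpa [mem_pset] using hb)) (fun b hb _ => by simpa [mem_pset])]

theorem monomialMinor_pset_inv_succ (g : Fin n → ℂ) (a : Fin n) :
    monomialMinor (w₀ * u) g (pset n u⁻¹ (u a + 1)) =
      (-1) ^ #{b | b < a ∧ u b < u a} * g a *
        monomialMinor (w₀ * u) g (pset n u⁻¹ (u a)) := by
  have hsucc := pset_succ u⁻¹ (u a)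
  rw [Equiv.Perm.coe_inv, Equiv.symm_apply_apply] at hsucc
  rw [hsucc, monomialMinor_revPerm_mul_insert u g (by simpa using apply_notMem_pset u⁻¹ (u a))
    (fun b hb => Or.inr (by simpa [mem_pset] using hb)) (fun b _ hb => by simpa [mem_pset])]

variable {h : Fin n → ℂ} {l : List ℕ} {g : Fin n → ℂ}

theorem Rminor_eq_monomialMinor
    (hZ : diagonal h * wordMat n l = monomialMatrix (w₀ * u) g)
    (hone : monomialMinor (w₀ * u) g univ = 1) {j : ℕ} (hj : j ≤ n) :
    Rminor n h u l j = monomialMinor (w₀ * u) g (pset n 1 j) := by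
  rcases hj.eq_or_lt with rfl | hj
  · rw [Rminor, if_pos rfl, pset_self_eq_univ, hone]
  · rw [Rminor, if_neg hj.ne, hZ, pset_eq_image_pset_inv _ 1, inv_one, mul_one,
      minorD_monomialMatrix]

theorem Bminor_eq_monomialMinor
    (hZ : diagonal h * wordMat n l = monomialMatrix (w₀ * u) g)
    (hone : monomialMinor (w₀ * u) g univ = 1) {j : ℕ} (hj : j ≤ n) :
    Bminor n h u l j = monomialMinor (w₀ * u) g (pset n u⁻¹ j) := by
  rcases hj.eq_or_lt with rfl | hj
  · rw [Bminor, if_pos rfl, pset_self_eq_univ, hone]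
  · rw [Bminor, if_neg hj.ne, hZ, pset_eq_image_pset_inv _ u, minorD_monomialMatrix]

end GridMinors

/-- Here `a : Fin n` is the 0-based version of the 1-indexed `a`, so that
`R_a = Rminor (a+1)`, `R_{a−1} = Rminor a`, and `u(a)` (1-indexed) is `u a + 1`. -/
theorem stmt10 (n : ℕ) (h : Fin n → ℂ) (hdet : ∏ j, h j = 1)
    (u : Equiv.Perm (Fin n)) (l : List ℕ)
    (hl : IsReducedWord n l ((Fin.revPerm : Equiv.Perm (Fin n)) * u)) (a : Fin n) :
    Rminor n h u l ((a : ℕ) + 1) * Bminor n h u l (u a : ℕ) =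
      Bminor n h u l ((u a : ℕ) + 1) * Rminor n h u l (a : ℕ) := by
  obtain ⟨g, hZ⟩ := exists_diagonal_mul_wordMat_eq_monomialMatrix h hl.1
  have hone : monomialMinor (Fin.revPerm * u) g univ = 1 := by
    rw [← det_monomialMatrix_eq_monomialMinor, ← hZ, det_mul, det_diagonal, hdet,
      det_wordMat hl.1.1, one_mul]
  rw [Rminor_eq_monomialMinor u hZ hone a.isLt, Rminor_eq_monomialMinor u hZ hone a.is_le',
    Bminor_eq_monomialMinor u hZ hone (u a).isLt, Bminor_eq_monomialMinor u hZ hone (u a).is_le',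
    monomialMinor_pset_one_succ, monomialMinor_pset_inv_succ]
  ring
end
end

section
/- Let J be a finite index set with a distinguished subset M ⊆ J of mutable indices, and let (b_{c,d})_{c ∈ J, d ∈ M} be an integer matrix that is skew-symmetric on M × M (i.e., b_{c,d} = −b_{d,c} for c, d ∈ M, and b_{d,d} = 0). Fix d ∈ M. Let Λ be a free abelian group containing elements (C_c)_{c ∈ J}, let ⟨·,·⟩ be a bilinear pairing on Λ such that ⟨C_c, C_e⟩ = b_{c,e} for all c ∈ J, e ∈ M. Define μ_d(C_c) := C_c + max(⟨C_c, C_d⟩, 0)·C_d for c ≠ d and μ_d(C_d) := −C_d. Then for all c ∈ J and e ∈ M, ⟨μ_d(C_c), μ_d(C_e)⟩ = b'_{c,e}, where b' is the matrix mutation of b in direction d: b'_{c,e} = −b_{c,e} if d ∈ {c,e}, and b'_{c,e} = b_{c,e} + max(b_{c,d},0)·b_{d,e} + b_{c,d}·max(−b_{d,e},0) otherwise. -/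
open Matrix Pointwise
open scoped Classical

noncomputable section

/-- mutation of relative cycles realizes matrix mutation of the
exchange matrix (Fock–Goncharov). -/
theorem stmt11 {J : Type*} [Fintype J] [DecidableEq J]
    {Λ : Type*} [AddCommGroup Λ] [Module.Free ℤ Λ]
    (Mut : Set J) (b : J → J → ℤ)
    (hskew : ∀ c ∈ Mut, ∀ e ∈ Mut, b c e = - b e c)
    (hdiag : ∀ d ∈ Mut, b d d = 0)
    (d : J) (hd : d ∈ Mut)
    (C : J → Λ) (P : Λ →ₗ[ℤ] Λ →ₗ[ℤ] ℤ)
    (hP : ∀ c : J, ∀ e ∈ Mut, P (C c) (C e) = b c e)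
    (μC : J → Λ)
    (hμC : ∀ c : J,
      μC c = if c = d then -C d else C c + (max (P (C c) (C d)) 0) • C d) :
    ∀ c : J, ∀ e ∈ Mut,
      P (μC c) (μC e) =
        if c = d ∨ e = d then - b c e
        else b c e + max (b c d) 0 * b d e + b c d * max (- b d e) 0 := by
  intro c e he
  have hPd : ∀ c' : J, P (C c') (C d) = b c' d := fun c' => hP c' d hd
  have hdd : b d d = 0 := hdiag d hd
  by_cases hc : c = d <;> by_cases heq : e = d
  · rw [hμC c, hμC e, if_pos hc, if_pos heq, if_pos (Or.inl hc)]
    simp only [map_neg, LinearMap.neg_apply]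
    rw [hPd d, hdd, hc, heq, hdd]
    ring
  · rw [hμC c, hμC e, if_pos hc, if_neg heq, if_pos (Or.inl hc)]
    simp only [map_add, map_neg, _root_.map_smul, LinearMap.add_apply,
      LinearMap.neg_apply, LinearMap.smul_apply, smul_eq_mul]
    rw [hP d e he, hPd e, hPd d, hdd, hc]
    ring
  · rw [hμC c, hμC e, if_pos heq, if_neg hc, if_pos (Or.inr heq)]
    simp only [map_add, map_neg, _root_.map_smul, LinearMap.add_apply,
      LinearMap.neg_apply, LinearMap.smul_apply, smul_eq_mul]
    rw [hPd c, hPd d, hdd, heq]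
    ring
  · have hed : b e d = - b d e := hskew e he d hd
    rw [hμC c, hμC e, if_neg hc, if_neg heq, if_neg (by simp [hc, heq])]
    simp only [map_add, _root_.map_smul, LinearMap.add_apply,
      LinearMap.smul_apply, smul_eq_mul]
    rw [hP c e he, hP d e he, hPd c, hPd d, hPd e, hdd, hed]
    ring
end
end
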